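/- arXiv:1408.7110 — 5 statements merged into one kernel-verified Lean document; each statement's English description precedes it below -/
import Mathlib

section
/- For all n ∈ ℕ, n ≥ 1, and all x, y ∈ [-1,1], one has δ_n(y)^2 ≤ 4 δ_n(x) (|x-y| + δ_n(x)), where δ_n(x) := n^{-1}(1-x^2)^{1/2} + n^{-2}. -/
/-! Set `a = √(1 - x²)`, `b = √(1 - y²)`, `t = |x - y|`, `u = 1/n` and `D = δₙ(x) = a u + u²`.
Since `b² - a² = (x - y)(x + y) ≤ 2t`, we get `b ≤ a + √(2t)`, hence `δₙ(y) ≤ D + √(2t) u`.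
Squaring, `δₙ(y)² ≤ 2D² + 4t u² ≤ 2D² + 4tD ≤ 4D(t + D)`, using `u² ≤ D`. -/

noncomputable def deltan (n : ℕ) (x : ℝ) : ℝ := Real.sqrt (1 - x^2) / n + 1 / (n:ℝ)^2

open Set

lemma Real.sqrt_le_sqrt_add_sqrt_of_le {p q r : ℝ} (hq : 0 ≤ q) (hr : 0 ≤ r) (h : p ≤ q + r) :
    √p ≤ √q + √r := by
  rw [Real.sqrt_le_iff]
  refine ⟨by positivity, ?_⟩
  nlinarith [Real.sq_sqrt hq, Real.sq_sqrt hr, mul_nonneg (Real.sqrt_nonneg q) (Real.sqrt_nonneg r)]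

lemma sqrt_one_sub_sq_le_add_sqrt {x y : ℝ} (hx : x ∈ Icc (-1 : ℝ) 1) (hy : y ∈ Icc (-1 : ℝ) 1) :
    √(1 - y ^ 2) ≤ √(1 - x ^ 2) + √(2 * |x - y|) := by
  have hsum : |x + y| ≤ 2 := abs_le.2 ⟨by linarith [hx.1, hy.1], by linarith [hx.2, hy.2]⟩
  have hdiff : x ^ 2 - y ^ 2 ≤ 2 * |x - y| :=
    calc x ^ 2 - y ^ 2 = (x - y) * (x + y) := by ring
      _ ≤ |x - y| * |x + y| := by rw [← abs_mul]; exact le_abs_self _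
      _ ≤ 2 * |x - y| := by nlinarith [abs_nonneg (x - y)]
  refine Real.sqrt_le_sqrt_add_sqrt_of_le ?_ (by positivity) (by linarith)
  nlinarith [hx.1, hx.2]

lemma deltan_nonneg (n : ℕ) (x : ℝ) : 0 ≤ deltan n x := by
  unfold deltan
  positivity

lemma one_div_sq_le_deltan (n : ℕ) (x : ℝ) : (1 / (n : ℝ)) ^ 2 ≤ deltan n x := by
  rw [deltan, div_pow, one_pow]
  exact le_add_of_nonneg_left (by positivity)

lemma deltan_le_deltan_add_sqrt_mul {x y : ℝ} (n : ℕ) (hx : x ∈ Icc (-1 : ℝ) 1)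
    (hy : y ∈ Icc (-1 : ℝ) 1) :
    deltan n y ≤ deltan n x + √(2 * |x - y|) * (1 / n) := by
  have h := div_le_div_of_nonneg_right (sqrt_one_sub_sq_le_add_sqrt hx hy) n.cast_nonneg
  rw [deltan, deltan]
  linarith [show (√(1 - x ^ 2) + √(2 * |x - y|)) / n = √(1 - x ^ 2) / n + √(2 * |x - y|) * (1 / n)
    by ring]

lemma sq_le_four_mul_of_le_add_sqrt_mul {D E t u : ℝ} (hE : 0 ≤ E) (ht : 0 ≤ t) (hu : u ^ 2 ≤ D)
    (h : E ≤ D + √(2 * t) * u) : E ^ 2 ≤ 4 * D * (t + D) := by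
  have hs : √(2 * t) ^ 2 = 2 * t := Real.sq_sqrt (by positivity)
  calc E ^ 2 ≤ (D + √(2 * t) * u) ^ 2 := pow_le_pow_left₀ hE h 2
    _ ≤ 2 * D ^ 2 + 2 * (√(2 * t) ^ 2 * u ^ 2) := by nlinarith [sq_nonneg (D - √(2 * t) * u)]
    _ ≤ 2 * D ^ 2 + 2 * (2 * t * D) := by rw [hs]; gcongr
    _ ≤ 4 * D * (t + D) := by nlinarith [(sq_nonneg u).trans hu]

theorem stmt0_general (n : ℕ) (x y : ℝ)
    (hx : x ∈ Set.Icc (-1:ℝ) 1) (hy : y ∈ Set.Icc (-1:ℝ) 1) :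
    (deltan n y)^2 ≤ 4 * deltan n x * (|x - y| + deltan n x) :=
  sq_le_four_mul_of_le_add_sqrt_mul (deltan_nonneg n y) (abs_nonneg _) (one_div_sq_le_deltan n x)
    (deltan_le_deltan_add_sqrt_mul n hx hy)

theorem stmt0 (n : ℕ) (hn : 1 ≤ n) (x y : ℝ)
    (hx : x ∈ Set.Icc (-1:ℝ) 1) (hy : y ∈ Set.Icc (-1:ℝ) 1) :
    (deltan n y)^2 ≤ 4 * deltan n x * (|x - y| + deltan n x) :=
  stmt0_general n x y hx hy
end

section
/- Let (x_i)_{i=0}^n be the Chebyshev partition of [-1,1] with I_i = [x_i, x_{i-1}]. Then for every 1 ≤ i ≤ n-1, |I_i|/3 ≤ |I_{i+1}| ≤ 3|I_i|. -/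
/-! The gap `x_k - x_{k+1}` equals `2 sin((2k+1)θ) sin θ` with `θ = π/(2n)`, so adjacent gaps
compare like `sin a` and `sin b` for `a = (2i-1)θ`, `b = (2i+1)θ`. Since `sin` is concave on
`[0, π]`, `sin x / x` decreases there, which gives `sin b ≤ (b/a) sin a ≤ 3 sin a`; reflecting
through `x ↦ π - x` gives `sin a ≤ 3 sin b`. -/

noncomputable def cheb (n i : ℕ) : ℝ := Real.cos (i * Real.pi / n)

open Real

lemma cheb_sub_cheb_succ (n k : ℕ) :
    cheb n k - cheb n (k + 1) = 2 * sin ((2 * k + 1) * (π / (2 * n))) * sin (π / (2 * n)) := by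
  unfold cheb
  rw [cos_sub_cos, show ((k : ℝ) * π / n - ((k + 1 : ℕ) : ℝ) * π / n) / 2 = -(π / (2 * n)) by
    push_cast; ring, sin_neg]
  push_cast; ring_nf

lemma sin_div_le_sin_div_of_le {a b : ℝ} (ha : 0 < a) (hab : a ≤ b) (hb : b ≤ π) :
    sin b / b ≤ sin a / a := by
  have hslope := strictConcaveOn_sin_Icc.concaveOn.antitoneOn_slope_gt (x := 0)
    ⟨le_rfl, pi_pos.le⟩
  simpa [slope_def_field] using
    hslope ⟨⟨ha.le, hab.trans hb⟩, ha⟩ ⟨⟨(ha.trans_le hab).le, hb⟩, ha.trans_le hab⟩ hab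

lemma sin_le_mul_sin_of_le {a b c : ℝ} (ha : 0 < a) (hab : a ≤ b) (hb : b ≤ π)
    (hc : b ≤ c * a) : sin b ≤ c * sin a := by
  have hb₀ : 0 < b := ha.trans_le hab
  have hsin_div : 0 ≤ sin a / a :=
    div_nonneg (sin_nonneg_of_nonneg_of_le_pi ha.le (hab.trans hb)) ha.le
  calc sin b = b * (sin b / b) := by field_simp
    _ ≤ b * (sin a / a) := mul_le_mul_of_nonneg_left (sin_div_le_sin_div_of_le ha hab hb) hb₀.le
    _ ≤ c * a * (sin a / a) := by gcongr
    _ = c * sin a := by field_simp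

lemma sin_odd_mul_le_three_mul {θ k : ℝ} (hθ : 0 < θ) (hk : 1 ≤ k) (hkθ : (2 * k + 2) * θ ≤ π) :
    sin ((2 * k - 1) * θ) ≤ 3 * sin ((2 * k + 1) * θ) ∧
      sin ((2 * k + 1) * θ) ≤ 3 * sin ((2 * k - 1) * θ) := by
  have ha : 0 < (2 * k - 1) * θ := mul_pos (by linarith) hθ
  have hab : (2 * k - 1) * θ ≤ (2 * k + 1) * θ := by nlinarith
  have hb : (2 * k + 1) * θ ≤ π := by nlinarith
  constructor
  · rw [← sin_pi_sub ((2 * k - 1) * θ), ← sin_pi_sub ((2 * k + 1) * θ)]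
    exact sin_le_mul_sin_of_le (by linarith) (by linarith) (by linarith) (by nlinarith)
  · exact sin_le_mul_sin_of_le ha hab hb (by nlinarith)

theorem stmt2_general (n : ℕ) (i : ℕ) (hi1 : 1 ≤ i) (hin : i ≤ n - 1) :
    (cheb n (i-1) - cheb n i) / 3 ≤ cheb n i - cheb n (i+1) ∧
      cheb n i - cheb n (i+1) ≤ 3 * (cheb n (i-1) - cheb n i) := by
  have hin' : (i : ℝ) + 1 ≤ n := by exact_mod_cast (by omega : i + 1 ≤ n)
  have hn : (0 : ℝ) < n := by linarith
  set θ := π / (2 * n) with hθ_def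
  have hθ : 0 < θ := by positivity
  have hiθ : (2 * (i : ℝ) + 2) * θ ≤ π := by
    rw [show (2 * (i : ℝ) + 2) * θ = (i + 1) / n * π by rw [hθ_def]; field_simp]
    exact mul_le_of_le_one_left pi_pos.le ((div_le_one hn).2 hin')
  have hsinθ : 0 ≤ sin θ := sin_nonneg_of_nonneg_of_le_pi hθ.le (by nlinarith)
  have hprev : cheb n (i - 1) - cheb n i = 2 * sin ((2 * i - 1) * θ) * sin θ := by
    have h := cheb_sub_cheb_succ n (i - 1)
    rw [Nat.sub_add_cancel hi1, Nat.cast_sub hi1] at h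
    rw [h, hθ_def]; push_cast; ring_nf
  obtain ⟨hlow, hup⟩ := sin_odd_mul_le_three_mul hθ (by exact_mod_cast hi1) hiθ
  rw [hprev, cheb_sub_cheb_succ]
  constructor <;> nlinarith

theorem stmt2 (n : ℕ) (hn : 1 ≤ n) (i : ℕ) (hi1 : 1 ≤ i) (hin : i ≤ n - 1) :
    (cheb n (i-1) - cheb n i) / 3 ≤ cheb n i - cheb n (i+1) ∧
      cheb n i - cheb n (i+1) ≤ 3 * (cheb n (i-1) - cheb n i) :=
  stmt2_general n i hi1 hin
end

section
/- Let (x_i)_{i=0}^n be the Chebyshev partition of [-1,1], I_i = [x_i, x_{i-1}], and define ψ_i(x) = |I_i|/(|x - x_i| + |I_i|). Then for every real α ≥ 2 there is a constant c (independent of n and x) such that ∑_{i=1}^n ψ_i(x)^α ≤ c for all x ∈ [-1,1]. -/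
noncomputable def psi (n i : ℕ) (x : ℝ) : ℝ :=
  (cheb n (i-1) - cheb n i) / (|x - cheb n i| + (cheb n (i-1) - cheb n i))

/-!
Substitute x = cos θ. In the angle variable every I_i has width π/n, and
ψ_i(cos θ) ≤ 8 / (1 + |nθ/π - i|): with t = iπ/n, both |I_i| = 2 sin(t - π/2n) sin(π/2n) and
|cos θ - cos t| = 2 sin((θ+t)/2) sin(|θ-t|/2) are products of sines, which Jordan's inequality
and the 1-Lipschitz bound for sin compare. As 0 ≤ ψ_i ≤ 1 and α ≥ 2, ψ_i^α ≤ ψ_i², and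
∑_i 1/(1 + |y - i|)² ≤ 2ζ(2) for every real y, since the integers on either side of y
inject into the positive integers.
-/

open Real

theorem le_pi_div_two_mul_sin {x : ℝ} (hx : 0 ≤ x) (hx' : x ≤ π / 2) : x ≤ π / 2 * sin x := by
  have := mul_le_sin hx hx'
  calc x = π / 2 * (2 / π * x) := by field_simp
    _ ≤ π / 2 * sin x := by gcongr

theorem abs_cos_sub_cos_of_mem_Icc {a b : ℝ} (ha : a ∈ Set.Icc 0 π) (hb : b ∈ Set.Icc 0 π) :
    |cos a - cos b| = 2 * sin ((a + b) / 2) * sin (|a - b| / 2) := by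
  have hσ : 0 ≤ sin ((a + b) / 2) :=
    sin_nonneg_of_nonneg_of_le_pi (by linarith [ha.1, hb.1]) (by linarith [ha.2, hb.2])
  have hδ : |(a - b) / 2| ≤ π := by
    rw [abs_le]; constructor <;> linarith [ha.1, hb.1, ha.2, hb.2]
  rw [cos_sub_cos, abs_mul, abs_mul, abs_neg, abs_two, abs_of_nonneg hσ,
    abs_sin_eq_sin_abs_of_abs_le_pi hδ, abs_div, abs_two]

theorem sin_abs_sub_div_two_le_sin_add_div_two {a b : ℝ} (ha : a ∈ Set.Icc 0 π)
    (hb : b ∈ Set.Icc 0 π) : sin (|a - b| / 2) ≤ sin ((a + b) / 2) := by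
  rw [← sub_nonneg, sin_sub_sin]
  obtain ⟨ha0, haπ⟩ := ha
  obtain ⟨hb0, hbπ⟩ := hb
  have : 0 ≤ sin (((a + b) / 2 - |a - b| / 2) / 2) := by
    apply sin_nonneg_of_nonneg_of_le_pi <;> cases abs_cases (a - b) <;> linarith
  have : 0 ≤ cos (((a + b) / 2 + |a - b| / 2) / 2) := by
    apply cos_nonneg_of_mem_Icc; constructor <;> cases abs_cases (a - b) <;> linarith
  positivity

-- δ: half the angular distance from θ to the node, m: mid-angle of the interval, s: its
-- half-width. If δ ≤ 2s, Jordan's inequality for s suffices; otherwise sin m ≤ sin σ + 3δ/2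
-- (sin is 1-Lipschitz) and δ ≤ (π/2) sin δ ≤ (π/2) sin σ.
theorem mul_sin_le_of_sin_le_sin {s δ σ m : ℝ} (hs : 0 ≤ s) (hs' : s ≤ π / 2)
    (hδ : 0 ≤ δ) (hδ' : δ ≤ π / 2) (hδσ : sin δ ≤ sin σ)
    (hm : 0 ≤ sin m) (hmσ : |m - σ| ≤ s + δ) :
    δ * sin m ≤ 7 * (sin σ * sin δ + sin m * sin s) := by
  have hsin_δ : 0 ≤ sin δ := sin_nonneg_of_nonneg_of_le_pi hδ (by linarith [pi_pos])
  have hsin_s : 0 ≤ sin s := sin_nonneg_of_nonneg_of_le_pi hs (by linarith [pi_pos])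
  have hπ : π < 3.15 := pi_lt_d2
  rcases le_or_gt δ (2 * s) with hsmall | hlarge
  · calc δ * sin m ≤ 2 * s * sin m := by gcongr
      _ ≤ 2 * (π / 2 * sin s) * sin m := by gcongr; exact le_pi_div_two_mul_sin hs hs'
      _ ≤ 7 * (sin σ * sin δ + sin m * sin s) := by
        nlinarith [mul_nonneg hm hsin_s, mul_nonneg (hsin_δ.trans hδσ) hsin_δ]
  · have hsin_m : sin m ≤ sin σ + 3 / 2 * δ := by
      linarith [(abs_le.mp ((abs_sin_sub_sin_le m σ).trans hmσ)).2]
    have hδ_le := le_pi_div_two_mul_sin hδ hδ'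
    have hP : 0 ≤ sin σ * sin δ := mul_nonneg (hsin_δ.trans hδσ) hsin_δ
    calc δ * sin m ≤ δ * sin σ + 3 / 2 * (δ * δ) := by nlinarith
      _ ≤ π / 2 * sin δ * sin σ + 3 / 2 * ((π / 2 * sin δ) * (π / 2 * sin δ)) := by
        gcongr; exact hsin_δ.trans hδσ
      _ ≤ (π / 2 + 3 / 2 * (π / 2) ^ 2) * (sin σ * sin δ) := by
        nlinarith [mul_le_mul_of_nonneg_left hδσ hsin_δ]
      _ ≤ 7 * (sin σ * sin δ) := by
        gcongr; nlinarith [pi_pos]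
      _ ≤ 7 * (sin σ * sin δ + sin m * sin s) := by
        have := mul_nonneg hm hsin_s; linarith

theorem cos_sub_cos_mul_one_add_le {θ t s : ℝ} (hθ : θ ∈ Set.Icc 0 π) (hs : 0 < s)
    (hst : 2 * s ≤ t) (ht : t ≤ π) :
    (cos (t - 2 * s) - cos t) * (1 + |θ - t| / (2 * s)) ≤
      8 * (|cos θ - cos t| + (cos (t - 2 * s) - cos t)) := by
  set σ := (θ + t) / 2
  set δ := |θ - t| / 2 with hδ_def
  have ht' : t ∈ Set.Icc 0 π := ⟨by linarith, ht⟩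
  have hh : cos (t - 2 * s) - cos t = 2 * sin (t - s) * sin s := by
    have hsum : (t - 2 * s + t) / 2 = t - s := by ring
    have hdiff : (t - 2 * s - t) / 2 = -s := by ring
    rw [cos_sub_cos, hsum, hdiff, sin_neg]; ring
  have hD : |cos θ - cos t| = 2 * sin σ * sin δ := abs_cos_sub_cos_of_mem_Icc hθ ht'
  have hm : 0 ≤ sin (t - s) := sin_nonneg_of_nonneg_of_le_pi (by linarith) (by linarith)
  have hδ : 0 ≤ δ := by positivity
  have hδ' : δ ≤ π / 2 := by
    have : |θ - t| ≤ π := abs_le.mpr ⟨by linarith [hθ.1], by linarith [hθ.2]⟩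
    rw [hδ_def]; linarith
  have hmσ : |t - s - σ| ≤ s + δ := by
    have : t - s - σ = -((θ - t) / 2) - s := by ring
    rw [this]
    refine (abs_sub _ _).trans ?_
    rw [abs_neg, abs_div, abs_two, abs_of_pos hs, hδ_def]; linarith
  have key := mul_sin_le_of_sin_le_sin hs.le (by linarith) hδ hδ'
    (sin_abs_sub_div_two_le_sin_add_div_two hθ ht') hm hmσ
  have hsin_s : sin s * (δ / s) ≤ δ := by
    calc sin s * (δ / s) ≤ s * (δ / s) := by gcongr; exact sin_le hs.le
      _ = δ := by field_simp
  have hD0 : 0 ≤ 2 * sin σ * sin δ := hD ▸ abs_nonneg _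
  rw [hD, hh, show |θ - t| / (2 * s) = δ / s by rw [hδ_def]; field_simp]
  nlinarith [mul_le_mul_of_nonneg_left hsin_s (by positivity : 0 ≤ 2 * sin (t - s))]

theorem sum_one_div_one_add_sub_sq_le {s : Finset ℤ} {y : ℝ} (hs : ∀ i ∈ s, (i : ℝ) ≤ y) :
    ∑ i ∈ s, 1 / (1 + (y - i)) ^ 2 ≤ π ^ 2 / 6 := by
  let k (i : ℤ) : ℕ := (⌊y⌋ - i).toNat + 1
  have hk : ∀ i ∈ s, (k i : ℤ) = ⌊y⌋ - i + 1 := fun i hi => by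
    have := Int.le_floor.mpr (hs i hi)
    simp only [k]; omega
  have hinj : Set.InjOn k s := fun i hi j hj hij => by
    have := hk i hi; have := hk j hj
    omega
  calc ∑ i ∈ s, 1 / (1 + (y - i)) ^ 2 ≤ ∑ i ∈ s, 1 / (k i : ℝ) ^ 2 := by
        refine Finset.sum_le_sum fun i hi => ?_
        have : (k i : ℝ) = ⌊y⌋ - i + 1 := by exact_mod_cast hk i hi
        gcongr
        linarith [Int.floor_le y]
    _ = ∑ j ∈ s.image k, 1 / (j : ℝ) ^ 2 :=
        (Finset.sum_image (f := fun j : ℕ => 1 / (j : ℝ) ^ 2) hinj).symm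
    _ ≤ π ^ 2 / 6 := sum_le_hasSum _ (fun _ _ => by positivity) hasSum_zeta_two

theorem sum_one_div_one_add_abs_sub_sq_le (s : Finset ℤ) (y : ℝ) :
    ∑ i ∈ s, 1 / (1 + |y - i|) ^ 2 ≤ π ^ 2 / 3 := by
  set below := s.filter fun i : ℤ => (i : ℝ) ≤ y
  set above := s.filter fun i : ℤ => ¬(i : ℝ) ≤ y
  have h_below : ∑ i ∈ below, 1 / (1 + |y - i|) ^ 2 ≤ π ^ 2 / 6 := by
    convert sum_one_div_one_add_sub_sq_le (s := below) fun i hi => (Finset.mem_filter.mp hi).2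
      using 5 with i hi
    exact abs_of_nonneg (sub_nonneg.mpr (Finset.mem_filter.mp hi).2)
  have h_above : ∑ i ∈ above, 1 / (1 + |y - i|) ^ 2 ≤ π ^ 2 / 6 := by
    have hneg : ∀ i ∈ above.image Neg.neg, (i : ℝ) ≤ -y := by
      simp only [above, Finset.mem_image, Finset.mem_filter]
      rintro _ ⟨i, ⟨-, hi⟩, rfl⟩
      push_cast; linarith
    have := sum_one_div_one_add_sub_sq_le hneg
    rw [Finset.sum_image fun a _ b _ h => neg_injective h] at this
    convert this using 5 with i hi
    rw [abs_of_neg (by linarith [(Finset.mem_filter.mp hi).2]), Int.cast_neg]; ring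
  rw [← Finset.sum_filter_add_sum_filter_not s fun i : ℤ => (i : ℝ) ≤ y]
  linarith

theorem cheb_lt_cheb_pred {n i : ℕ} (hi : 1 ≤ i) (hin : i ≤ n) : cheb n i < cheb n (i - 1) := by
  have hn : (0 : ℝ) < n := by exact_mod_cast hi.trans hin
  have hin' : (i : ℝ) ≤ n := by exact_mod_cast hin
  rw [cheb, cheb, Nat.cast_sub hi, Nat.cast_one]
  apply cos_lt_cos_of_nonneg_of_le_pi
  · have : (1 : ℝ) ≤ i := by exact_mod_cast hi
    exact div_nonneg (mul_nonneg (by linarith) pi_pos.le) hn.le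
  · rw [div_le_iff₀ hn]; nlinarith [pi_pos]
  · gcongr; linarith

theorem psi_mem_Icc {n i : ℕ} (hi : 1 ≤ i) (hin : i ≤ n) (x : ℝ) : psi n i x ∈ Set.Icc 0 1 := by
  have hh := sub_pos.mpr (cheb_lt_cheb_pred hi hin)
  have hx := abs_nonneg (x - cheb n i)
  exact ⟨div_nonneg hh.le (by positivity), (div_le_one (by positivity)).mpr (by linarith)⟩

theorem psi_cos_le {n i : ℕ} (hi : 1 ≤ i) (hin : i ≤ n) {θ : ℝ} (hθ : θ ∈ Set.Icc 0 π) :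
    psi n i (cos θ) ≤ 8 / (1 + |θ * n / π - i|) := by
  have hn : (0 : ℝ) < n := by exact_mod_cast hi.trans hin
  have hi' : (1 : ℝ) ≤ i := by exact_mod_cast hi
  have hin' : (i : ℝ) ≤ n := by exact_mod_cast hin
  have key := cos_sub_cos_mul_one_add_le hθ (s := π / (2 * n)) (t := i * π / n) (by positivity)
    (by rw [mul_div_assoc', mul_div_mul_left _ _ two_ne_zero]; gcongr; nlinarith [pi_pos])
    (by rw [div_le_iff₀ hn]; nlinarith [pi_pos])
  have hprev : i * π / n - 2 * (π / (2 * n)) = ((i - 1 : ℕ) : ℝ) * π / n := by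
    rw [Nat.cast_sub hi, Nat.cast_one]; field_simp
  have hd : |θ - i * π / n| / (2 * (π / (2 * n))) = |θ * n / π - i| := by
    have : θ * n / π - i = (θ - i * π / n) / (2 * (π / (2 * n))) := by field_simp
    rw [this, abs_div, abs_of_pos (by positivity : 0 < 2 * (π / (2 * n)))]
  rw [hprev, hd, ← cheb, ← cheb] at key
  have hh := sub_pos.mpr (cheb_lt_cheb_pred hi hin)
  rw [psi, div_le_div_iff₀ (by positivity) (by positivity)]
  linarith

theorem psi_cos_rpow_le {n i : ℕ} (hi : 1 ≤ i) (hin : i ≤ n) {θ : ℝ} (hθ : θ ∈ Set.Icc 0 π)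
    {α : ℝ} (hα : 2 ≤ α) : psi n i (cos θ) ^ α ≤ 64 * (1 / (1 + |θ * n / π - i|) ^ 2) := by
  obtain ⟨h0, h1⟩ := psi_mem_Icc hi hin (cos θ)
  calc psi n i (cos θ) ^ α ≤ psi n i (cos θ) ^ (2 : ℝ) :=
        rpow_le_rpow_of_exponent_ge' h0 h1 zero_le_two hα
    _ = psi n i (cos θ) ^ 2 := rpow_two _
    _ ≤ (8 / (1 + |θ * n / π - i|)) ^ 2 := by gcongr; exact psi_cos_le hi hin hθ
    _ = 64 * (1 / (1 + |θ * n / π - i|) ^ 2) := by rw [div_pow]; ring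

theorem stmt3 (α : ℝ) (hα : 2 ≤ α) :
    ∃ c : ℝ, 0 < c ∧ ∀ n : ℕ, 1 ≤ n → ∀ x ∈ Set.Icc (-1:ℝ) 1,
      ∑ i ∈ Finset.Icc 1 n, (psi n i x) ^ α ≤ c := by
  refine ⟨64 * (π ^ 2 / 3), by positivity, fun n _ x hx => ?_⟩
  obtain ⟨θ, hθ, rfl⟩ : ∃ θ ∈ Set.Icc 0 π, cos θ = x :=
    ⟨arccos x, ⟨arccos_nonneg x, arccos_le_pi x⟩, cos_arccos hx.1 hx.2⟩
  calc ∑ i ∈ Finset.Icc 1 n, psi n i (cos θ) ^ α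
      ≤ ∑ i ∈ Finset.Icc 1 n, 64 * (1 / (1 + |θ * n / π - i|) ^ 2) :=
        Finset.sum_le_sum fun i hi =>
          psi_cos_rpow_le (Finset.mem_Icc.mp hi).1 (Finset.mem_Icc.mp hi).2 hθ hα
    _ = 64 * ∑ i ∈ (Finset.Icc 1 n).map (Nat.castEmbedding : ℕ ↪ ℤ),
        1 / (1 + |θ * n / π - i|) ^ 2 := by
        rw [Finset.mul_sum, Finset.sum_map]; simp
    _ ≤ 64 * (π ^ 2 / 3) := by gcongr; exact sum_one_div_one_add_abs_sub_sq_le _ _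
end

section
/- For the Chebyshev partition (x_i)_{i=0}^n of [-1,1] with n ≥ 2 and indices 1 ≤ i ≤ n, 1 ≤ μ ≤ ⌈n/2⌉, one has |x_i - x_μ| / |I_μ| ≥ |i - μ|/200, where I_μ = [x_μ, x_{μ-1}]. -/
namespace Real

theorem div_ten_le_sin {x : ℝ} (hx₀ : 0 ≤ x) (hx : x ≤ 7 * π / 8) : x / 10 ≤ sin x := by
  rcases le_total x (π / 2) with hle | hge
  · have : x / 10 ≤ 2 / π * x := by
      rw [div_mul_eq_mul_div, le_div_iff₀ pi_pos]
      nlinarith [pi_le_four]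
    exact this.trans (mul_le_sin hx₀ hle)
  · -- on `[π/2, 7π/8]`, `sin x = sin (π - x) ≥ sin (π/8) > π/8 - (π/8)³/6`
    have hsin : sin (π / 8) ≤ sin x := by
      rw [← sin_pi_sub x]
      exact sin_le_sin_of_le_of_le_pi_div_two (by linarith [pi_pos]) (by linarith) (by linarith)
    have hcube := sin_gt_sub_cube (x := π / 8) (by positivity)
    have hπ2 : π ^ 2 ≤ 16 := by nlinarith [pi_pos, pi_le_four]
    have hπ3 : π ^ 3 ≤ 16 * π := by nlinarith [pi_pos]
    linarith

theorem abs_div_ten_le_abs_sin {x : ℝ} (hx : |x| ≤ 7 * π / 8) : |x| / 10 ≤ |sin x| := by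
  rw [abs_sin_eq_sin_abs_of_abs_le_pi (by linarith [pi_pos])]
  exact div_ten_le_sin (abs_nonneg x) hx

theorem abs_cos_sub_cos_eq (x y : ℝ) :
    |cos x - cos y| = 2 * |sin ((x + y) / 2)| * |sin ((x - y) / 2)| := by
  rw [cos_sub_cos, abs_mul, abs_mul, abs_neg, abs_two]

theorem abs_sq_sub_sq_eq (x y : ℝ) : |x ^ 2 - y ^ 2| = 4 * |(x + y) / 2| * |(x - y) / 2| := by
  rw [sq_sub_sq, abs_mul, abs_div, abs_div, abs_two]
  ring

theorem abs_cos_sub_cos_le_abs_sq_sub_sq (x y : ℝ) : |cos x - cos y| ≤ |x ^ 2 - y ^ 2| / 2 := by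
  rw [abs_cos_sub_cos_eq, abs_sq_sub_sq_eq]
  calc 2 * |sin ((x + y) / 2)| * |sin ((x - y) / 2)| ≤ 2 * |(x + y) / 2| * |(x - y) / 2| := by
        gcongr 2 * ?_ * ?_ <;> exact abs_sin_le_abs
    _ = _ := by ring

theorem abs_sq_sub_sq_le_abs_cos_sub_cos {x y : ℝ} (hx : 0 ≤ x) (hy : 0 ≤ y)
    (hxy : x + y ≤ 7 * π / 4) : |x ^ 2 - y ^ 2| / 200 ≤ |cos x - cos y| := by
  have hsum : |(x + y) / 2| ≤ 7 * π / 8 := by rw [abs_le]; constructor <;> linarith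
  have hdiff : |(x - y) / 2| ≤ 7 * π / 8 := by rw [abs_le]; constructor <;> linarith
  rw [abs_cos_sub_cos_eq, abs_sq_sub_sq_eq]
  calc 4 * |(x + y) / 2| * |(x - y) / 2| / 200 = 2 * (|(x + y) / 2| / 10) * (|(x - y) / 2| / 10) := by
        ring
    _ ≤ 2 * |sin ((x + y) / 2)| * |sin ((x - y) / 2)| := by
        gcongr
        exacts [abs_div_ten_le_abs_sin hsum, abs_div_ten_le_abs_sin hdiff]

end Real

open Real

theorem stmt6_general (n : ℕ) (hn : 2 ≤ n) (i μ : ℕ) (hin : i ≤ n)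
    (hμ1 : 1 ≤ μ) (hμ : μ ≤ (n + 1) / 2) :
    (|(i:ℝ) - (μ:ℝ)| / 200) * (cheb n (μ-1) - cheb n μ) ≤ |cheb n i - cheb n μ| := by
  set θ := π / n
  have hcheb (k : ℕ) : cheb n k = cos (k * θ) := by rw [cheb, mul_div_assoc]
  have hμ1' : (1 : ℝ) ≤ μ := by exact_mod_cast hμ1
  have hangles : (i : ℝ) * θ + μ * θ ≤ 7 * π / 4 := by
    have : (4 * (i + μ) : ℝ) ≤ 7 * n := by exact_mod_cast (by omega : 4 * (i + μ) ≤ 7 * n)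
    rw [← add_mul, mul_div_assoc', div_le_div_iff₀ (by positivity) (by norm_num)]
    nlinarith [pi_pos]
  rw [hcheb, hcheb, hcheb, Nat.cast_sub hμ1, Nat.cast_one]
  calc |(i:ℝ) - μ| / 200 * (cos ((μ - 1) * θ) - cos (μ * θ))
      ≤ |(i:ℝ) - μ| / 200 * (|((μ - 1) * θ) ^ 2 - (μ * θ) ^ 2| / 2) := by
        gcongr
        exact (le_abs_self _).trans (abs_cos_sub_cos_le_abs_sq_sub_sq _ _)
    _ = |(i:ℝ) - μ| * ((2 * μ - 1) * θ ^ 2) / 400 := by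
        rw [show ((μ - 1) * θ) ^ 2 - (μ * θ) ^ 2 = -((2 * μ - 1) * θ ^ 2) by ring, abs_neg,
          abs_of_nonneg (a := (2 * μ - 1) * θ ^ 2) (by nlinarith [sq_nonneg θ])]
        ring
    _ ≤ |(i:ℝ) - μ| * (2 * (i + μ) * θ ^ 2) / 400 := by gcongr; linarith [i.cast_nonneg (α := ℝ)]
    _ = |((i:ℝ) * θ) ^ 2 - (μ * θ) ^ 2| / 200 := by
        rw [show ((i:ℝ) * θ) ^ 2 - (μ * θ) ^ 2 = (i - μ) * ((i + μ) * θ ^ 2) by ring, abs_mul,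
          abs_of_nonneg (a := (i + μ) * θ ^ 2) (by positivity)]
        ring
    _ ≤ |cos (i * θ) - cos (μ * θ)| :=
        abs_sq_sub_sq_le_abs_cos_sub_cos (by positivity) (by positivity) hangles

theorem stmt6 (n : ℕ) (hn : 2 ≤ n) (i μ : ℕ) (hi1 : 1 ≤ i) (hin : i ≤ n)
    (hμ1 : 1 ≤ μ) (hμ : μ ≤ (n + 1) / 2) :
    (|(i:ℝ) - (μ:ℝ)| / 200) * (cheb n (μ-1) - cheb n μ) ≤ |cheb n i - cheb n μ| :=
  stmt6_general n hn i μ hin hμ1 hμ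
end

section
/- Let M ∈ ℕ, Z = (z_j)_{j=1}^M ⊂ [-1,1] strictly increasing, and let w be a doubling weight on [-1,1]. Suppose that for any n ∈ ℕ, A > 0, and x, y with [x,y] ⊂ I_{A,1/n} (i.e., |u - z_j| ≥ A δ_n(z_j) for all u ∈ [x,y] and all j) and |x-y| ≤ B δ_n(x), one has c* w(y) ≤ w(x) ≤ c*^{-1} w(y) with c* depending only on w, A, B. Then for any n ∈ ℕ and A > 0, w(x) ≍ w_n(x) for all x ∈ I_{A,1/n}, with equivalence constants depending only on w and A. -/
open MeasureTheory

noncomputable def wInt (w : ℝ → ℝ) (a b : ℝ) : ℝ :=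
  ∫ u in Set.Icc a b ∩ Set.Icc (-1:ℝ) 1, w u

def IsDoubling (w : ℝ → ℝ) (L : ℝ) : Prop :=
  (∀ x, 0 ≤ w x) ∧ IntegrableOn w (Set.Icc (-1:ℝ) 1) ∧
  (0 < ∫ u in Set.Icc (-1:ℝ) 1, w u) ∧
  ∀ a b : ℝ, -1 ≤ a → a ≤ b → b ≤ 1 →
    wInt w ((a+b)/2 - (b-a)) ((a+b)/2 + (b-a)) ≤ L * wInt w a b

/-- `wavg w n x = w_n(x)`, the `n`-th average of `w`. -/
noncomputable def wavg (w : ℝ → ℝ) (n : ℕ) (x : ℝ) : ℝ :=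
  (deltan n x)⁻¹ * wInt w (x - deltan n x) (x + deltan n x)

/-- `I_{A,h}`: points of `[-1,1]` at distance at least `A·ρ(h,z_j)` from every `z_j`. -/
def ISet (M : ℕ) (z : Fin M → ℝ) (A h : ℝ) : Set ℝ :=
  {x | x ∈ Set.Icc (-1:ℝ) 1 ∧ ∀ j, A * (h * Real.sqrt (1 - (z j)^2) + h^2) ≤ |x - z j|}

/-!
Every point within `t·δ_n(x)` of `x ∈ I_{A,1/n}`, with `t = A/(2(A+2))`, lies in `I_{A/2,1/n}`,
because `δ_n(x) ≤ 2δ_n(z) + |x - z|`. The hypothesis (for `A/2` and `B = 1`) therefore makes `w`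
comparable to `w(x)` on an interval `J ⊆ [-1,1]` of length `t·δ_n(x)` through `x`, so
`∫_J w ≍ w(x)·|J|`. Since `J` sits inside `W = [x - δ_n(x), x + δ_n(x)] ∩ [-1,1]` and `k`
doublings with `(3/2)^k t ≥ 2` cover `W`, also `∫_W w ≍ ∫_J w`; and `∫_W w = δ_n(x)·w_n(x)`.
-/

open Set

section Deltan

variable {n : ℕ}

lemma deltan_pos (hn : 1 ≤ n) (x : ℝ) : 0 < deltan n x := by
  have : (0 : ℝ) < n := by exact_mod_cast hn
  unfold deltan
  positivity

lemma deltan_le_two (hn : 1 ≤ n) (x : ℝ) : deltan n x ≤ 2 := by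
  have hn' : (1 : ℝ) ≤ n := by exact_mod_cast hn
  have hs : √(1 - x ^ 2) ≤ 1 := Real.sqrt_le_one.2 (by nlinarith)
  have h₁ : √(1 - x ^ 2) / n ≤ 1 := div_le_one_of_le₀ (hs.trans hn') (by positivity)
  have h₂ : 1 / (n : ℝ) ^ 2 ≤ 1 := div_le_one_of_le₀ (one_le_pow₀ hn') (by positivity)
  unfold deltan
  linarith

lemma deltan_eq (n : ℕ) (x : ℝ) : deltan n x = 1 / n * √(1 - x ^ 2) + (1 / n) ^ 2 := by
  unfold deltan
  ring

lemma sqrt_one_sub_sq_le {x z m : ℝ} (hx : x ∈ Icc (-1 : ℝ) 1) (hz : z ∈ Icc (-1 : ℝ) 1)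
    (hm : 0 < m) : √(1 - x ^ 2) ≤ √(1 - z ^ 2) + m * |x - z| + 1 / m := by
  obtain ⟨hx₁, hx₂⟩ := hx
  obtain ⟨hz₁, hz₂⟩ := hz
  have hr : √(1 - z ^ 2) ^ 2 = 1 - z ^ 2 := Real.sq_sqrt (by nlinarith)
  have hsq : 1 - x ^ 2 ≤ 1 - z ^ 2 + 2 * |x - z| := by
    have : |x ^ 2 - z ^ 2| ≤ 2 * |x - z| := by
      rw [show x ^ 2 - z ^ 2 = (x - z) * (x + z) by ring, abs_mul, mul_comm]
      gcongr
      exact abs_le.2 ⟨by linarith, by linarith⟩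
    linarith [neg_abs_le (x ^ 2 - z ^ 2)]
  have hcross : m * |x - z| * (1 / m) = |x - z| := by field_simp
  have hr₀ := Real.sqrt_nonneg (1 - z ^ 2)
  have hd₀ := abs_nonneg (x - z)
  rw [Real.sqrt_le_left (by positivity)]
  nlinarith [mul_nonneg hr₀ (mul_nonneg hm.le hd₀), mul_nonneg hr₀ (one_div_pos.2 hm).le,
    sq_nonneg (m * |x - z|), sq_nonneg (1 / m)]

lemma deltan_le_two_mul_deltan_add {x z : ℝ} (hn : 1 ≤ n) (hx : x ∈ Icc (-1 : ℝ) 1)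
    (hz : z ∈ Icc (-1 : ℝ) 1) : deltan n x ≤ 2 * deltan n z + |x - z| := by
  have hn' : (0 : ℝ) < n := by exact_mod_cast hn
  have h := div_le_div_of_nonneg_right (sqrt_one_sub_sq_le hx hz hn') hn'.le
  rw [show (√(1 - z ^ 2) + n * |x - z| + 1 / n) / n = √(1 - z ^ 2) / n + |x - z| + 1 / n ^ 2 by
    field_simp] at h
  have : 0 ≤ √(1 - z ^ 2) / n := by positivity
  unfold deltan
  linarith

end Deltan

section ISet

variable {M n : ℕ} {z : Fin M → ℝ} {A x y : ℝ}

lemma mem_ISet_iff :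
    x ∈ ISet M z A (1 / n) ↔ x ∈ Icc (-1 : ℝ) 1 ∧ ∀ j, A * deltan n (z j) ≤ |x - z j| := by
  simp only [ISet, deltan_eq, mem_ofPred_eq]

lemma mem_ISet_half_of_abs_sub_le (hzI : ∀ j, z j ∈ Icc (-1 : ℝ) 1) (hn : 1 ≤ n) (hA : 0 ≤ A)
    (hx : x ∈ ISet M z A (1 / n)) (hy : y ∈ Icc (-1 : ℝ) 1)
    (hyx : |y - x| ≤ A / (2 * (A + 2)) * deltan n x) : y ∈ ISet M z (A / 2) (1 / n) := by
  rw [mem_ISet_iff] at hx ⊢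
  refine ⟨hy, fun j => ?_⟩
  have hδ := mul_le_mul_of_nonneg_left (deltan_le_two_mul_deltan_add hn hx.1 (hzI j)) hA
  have hAz := hx.2 j
  have hclose : A / (2 * (A + 2)) * deltan n x ≤ |x - z j| / 2 := by
    rw [div_mul_eq_mul_div, div_le_iff₀ (by positivity)]
    nlinarith
  have htri : |x - z j| ≤ |y - x| + |y - z j| := by
    simpa only [abs_sub_comm x y] using abs_sub_le x y (z j)
  linarith

end ISet

section Doubling

variable {w : ℝ → ℝ} {L : ℝ}

lemma wInt_eq_setIntegral {a b : ℝ} (hab : Icc a b ⊆ Icc (-1 : ℝ) 1) :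
    wInt w a b = ∫ u in Icc a b, w u := by
  rw [wInt, inter_eq_self_of_subset_left hab]

lemma IsDoubling.setIntegral_mono_set (hw : IsDoubling w L) {s t : Set ℝ} (hst : s ⊆ t)
    (ht : t ⊆ Icc (-1 : ℝ) 1) : ∫ u in s, w u ≤ ∫ u in t, w u :=
  MeasureTheory.setIntegral_mono_set (hw.2.1.mono_set ht) (.of_forall hw.1) hst.eventuallyLE

lemma IsDoubling.one_le (hw : IsDoubling w L) : 1 ≤ L := by
  have h := hw.2.2.2 (-1) 1 le_rfl (by norm_num) le_rfl
  have hwhole : ∀ a b : ℝ, a ≤ -1 → 1 ≤ b → wInt w a b = ∫ u in Icc (-1 : ℝ) 1, w u := by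
    intro a b ha hb
    rw [wInt, inter_eq_self_of_subset_right (Icc_subset_Icc ha hb)]
  rw [hwhole _ _ (by norm_num) (by norm_num), hwhole _ _ le_rfl le_rfl] at h
  nlinarith [hw.2.2.1]

lemma IsDoubling.setIntegral_le_pow_mul (hw : IsDoubling w L) {aW bW : ℝ} (haW : -1 ≤ aW)
    (hbW : bW ≤ 1) (k : ℕ) : ∀ a b : ℝ, aW ≤ a → a ≤ b → b ≤ bW →
      bW - aW ≤ (3 / 2) ^ k * (b - a) →
      ∫ u in Icc aW bW, w u ≤ L ^ k * ∫ u in Icc a b, w u := by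
  induction k with
  | zero =>
    intro a b ha hab hb hlen
    rw [pow_zero, one_mul] at hlen ⊢
    rw [show a = aW by linarith, show b = bW by linarith]
  | succ k ih =>
    intro a b ha hab hb hlen
    set a' := max ((a + b) / 2 - (b - a)) aW
    set b' := min ((a + b) / 2 + (b - a)) bW
    have hlen' : min (3 / 2 * (b - a)) (bW - aW) ≤ b' - a' := by
      simp only [a', b', max_def, min_def]
      split_ifs <;> linarith
    have hstep : bW - aW ≤ (3 / 2) ^ k * (b' - a') := by
      refine le_trans ?_ (mul_le_mul_of_nonneg_left hlen' (by positivity))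
      rcases min_cases (3 / 2 * (b - a)) (bW - aW) with ⟨h, -⟩ | ⟨h, -⟩ <;> rw [h]
      · linarith [show (3 / 2 : ℝ) ^ (k + 1) * (b - a) = (3 / 2) ^ k * (3 / 2 * (b - a)) by ring]
      · exact le_mul_of_one_le_left (by linarith) (one_le_pow₀ (by norm_num))
    have hgrow : ∫ u in Icc a' b', w u ≤ L * ∫ u in Icc a b, w u := by
      rw [← wInt_eq_setIntegral (a := a) (b := b) (Icc_subset_Icc (by linarith) (by linarith))]
      refine le_trans ?_ (hw.2.2.2 a b (by linarith) hab (by linarith))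
      refine hw.setIntegral_mono_set ?_ inter_subset_right
      exact subset_inter (Icc_subset_Icc (le_max_left _ _) (min_le_left _ _))
        (Icc_subset_Icc (haW.trans (le_max_right _ _)) ((min_le_right _ _).trans hbW))
    have hLk : 0 ≤ L ^ k := pow_nonneg (zero_le_one.trans hw.one_le) k
    calc ∫ u in Icc aW bW, w u
        ≤ L ^ k * ∫ u in Icc a' b', w u :=
          ih a' b' (le_max_right _ _)
            (sub_nonneg.1 ((le_min (by linarith) (by linarith)).trans hlen'))
            (min_le_right _ _) hstep
      _ ≤ L ^ k * (L * ∫ u in Icc a b, w u) := mul_le_mul_of_nonneg_left hgrow hLk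
      _ = L ^ (k + 1) * ∫ u in Icc a b, w u := by ring

end Doubling

lemma exists_mem_Icc_add_of_le_one {x ℓ : ℝ} (hx : x ∈ Icc (-1 : ℝ) 1) (hℓ : 0 ≤ ℓ) (hℓ₁ : ℓ ≤ 1) :
    ∃ a, x ∈ Icc a (a + ℓ) ∧ -1 ≤ a ∧ a + ℓ ≤ 1 := by
  rcases le_total x 0 with h | h
  · exact ⟨x, ⟨le_rfl, by linarith⟩, hx.1, by linarith⟩
  · exact ⟨x - ℓ, ⟨by linarith, by linarith⟩, by linarith, by linarith [hx.2]⟩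

lemma mul_le_setIntegral_Icc_and_le {f : ℝ → ℝ} {a b m m' : ℝ} (hab : a ≤ b)
    (hf : IntegrableOn f (Icc a b)) (hbound : ∀ y ∈ Icc a b, m ≤ f y ∧ f y ≤ m') :
    m * (b - a) ≤ ∫ y in Icc a b, f y ∧ ∫ y in Icc a b, f y ≤ m' * (b - a) := by
  have hvol := Real.volume_real_Icc_of_le hab
  constructor
  · simpa only [hvol] using setIntegral_ge_of_const_le_real measurableSet_Icc
      measure_Icc_lt_top.ne (fun y hy => (hbound y hy).1) hf
  · have h := setIntegral_mono_on hf (integrableOn_const measure_Icc_lt_top.ne) measurableSet_Icc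
      (fun y hy => (hbound y hy).2)
    rwa [setIntegral_const, smul_eq_mul, hvol, mul_comm] at h

lemma IsDoubling.average_comparable_of_locally_comparable {w : ℝ → ℝ} {L x δ t c : ℝ} {k : ℕ}
    (hw : IsDoubling w L) (hx : x ∈ Icc (-1 : ℝ) 1) (hδ : 0 < δ) (hδ₂ : δ ≤ 2) (ht : 0 < t)
    (ht₂ : t ≤ 1 / 2) (hk : 2 ≤ (3 / 2) ^ k * t)
    (hloc : ∀ y ∈ Icc (-1 : ℝ) 1, |y - x| ≤ t * δ → c * w x ≤ w y ∧ w y ≤ c⁻¹ * w x) :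
    c * t * w x ≤ δ⁻¹ * wInt w (x - δ) (x + δ) ∧
      δ⁻¹ * wInt w (x - δ) (x + δ) ≤ L ^ k * c⁻¹ * t * w x := by
  have htδ : 0 ≤ t * δ := by positivity
  have htδ₁ : t * δ ≤ δ := by nlinarith
  obtain ⟨a, hxJ, ha₁, ha₂⟩ := exists_mem_Icc_add_of_le_one (ℓ := t * δ) hx htδ (by nlinarith)
  have hJ : Icc a (a + t * δ) ⊆ Icc (-1 : ℝ) 1 := Icc_subset_Icc ha₁ ha₂
  have hJbounds := mul_le_setIntegral_Icc_and_le (by linarith) (hw.2.1.mono_set hJ)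
    fun y hy => hloc y (hJ hy)
      (abs_sub_le_iff.2 ⟨by linarith [hy.2, hxJ.1], by linarith [hy.1, hxJ.2]⟩)
  rw [add_sub_cancel_left] at hJbounds
  have hW : wInt w (x - δ) (x + δ) = ∫ u in Icc (max (x - δ) (-1)) (min (x + δ) 1), w u := by
    rw [wInt, Icc_inter_Icc]
  have haW : max (x - δ) (-1) ≤ a := max_le (by linarith [hxJ.2]) ha₁
  have hbW : a + t * δ ≤ min (x + δ) 1 := le_min (by linarith [hxJ.1]) ha₂
  have hJW : Icc a (a + t * δ) ⊆ Icc (max (x - δ) (-1)) (min (x + δ) 1) := Icc_subset_Icc haW hbW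
  have hWJ := hw.setIntegral_le_pow_mul (le_max_right _ _) (min_le_right _ _) k a (a + t * δ)
    haW (by linarith) hbW (by nlinarith [min_le_left (x + δ) 1, le_max_left (x - δ) (-1)])
  have hsub := hw.setIntegral_mono_set hJW
    (Icc_subset_Icc (le_max_right _ _) (min_le_right _ _))
  have hLk : 0 ≤ L ^ k := pow_nonneg (zero_le_one.trans hw.one_le) k
  rw [hW, le_inv_mul_iff₀ hδ, inv_mul_le_iff₀ hδ]
  constructor
  · linarith [hJbounds.1, show δ * (c * t * w x) = c * w x * (t * δ) by ring]
  · nlinarith [mul_le_mul_of_nonneg_left hJbounds.2 hLk]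

lemma inv_add_mul_le_and_le_mul {a v c₁ c₂ : ℝ} (hc₁ : 0 < c₁) (hc₂ : 0 ≤ c₂) (ha : 0 ≤ a)
    (hlo : c₁ * a ≤ v) (hhi : v ≤ c₂ * a) :
    (c₁⁻¹ + c₂)⁻¹ * v ≤ a ∧ a ≤ (c₁⁻¹ + c₂) * v := by
  have hC : 0 < c₁⁻¹ + c₂ := by positivity
  have hv : 0 ≤ v := (mul_nonneg hc₁.le ha).trans hlo
  have ha' : a ≤ c₁⁻¹ * v := (le_inv_mul_iff₀ hc₁).2 hlo
  refine ⟨(inv_mul_le_iff₀ hC).2 ?_, ?_⟩ <;> nlinarith [inv_pos.2 hc₁]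

theorem stmt10_general (M : ℕ) (z : Fin M → ℝ)
    (hzI : ∀ j, z j ∈ Set.Icc (-1:ℝ) 1) (w : ℝ → ℝ) (L : ℝ) (hw : IsDoubling w L)
    (hyp : ∀ A B : ℝ, 0 < A → 0 < B → ∃ cs : ℝ, 0 < cs ∧ ∀ n : ℕ, 1 ≤ n → ∀ x y : ℝ,
      Set.uIcc x y ⊆ ISet M z A (1/n) → |x - y| ≤ B * deltan n x →
        cs * w y ≤ w x ∧ w x ≤ cs⁻¹ * w y) :
    ∀ A : ℝ, 0 < A → ∃ C : ℝ, 0 < C ∧ ∀ n : ℕ, 1 ≤ n → ∀ x ∈ ISet M z A (1/n),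
      C⁻¹ * wavg w n x ≤ w x ∧ w x ≤ C * wavg w n x := by
  intro A hA
  obtain ⟨cs, hcs, hcomp⟩ := hyp (A / 2) 1 (by positivity) one_pos
  set t := A / (2 * (A + 2))
  have ht : 0 < t := by positivity
  have ht₂ : t ≤ 1 / 2 := by rw [div_le_iff₀ (by positivity)]; linarith
  obtain ⟨k, hk⟩ := pow_unbounded_of_one_lt (2 / t) (by norm_num : (1 : ℝ) < 3 / 2)
  have hLk : 0 ≤ L ^ k * cs⁻¹ * t := by
    have := pow_nonneg (zero_le_one.trans hw.one_le) k
    positivity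
  refine ⟨(cs * t)⁻¹ + L ^ k * cs⁻¹ * t, by positivity, fun n hn x hx => ?_⟩
  have hloc : ∀ y ∈ Icc (-1 : ℝ) 1, |y - x| ≤ t * deltan n x →
      cs * w x ≤ w y ∧ w y ≤ cs⁻¹ * w x := by
    intro y hy hyx
    have hsub : uIcc x y ⊆ ISet M z (A / 2) (1 / n) := fun v hv =>
      mem_ISet_half_of_abs_sub_le hzI hn hA.le hx (uIcc_subset_Icc hx.1 hy hv)
        ((abs_sub_left_of_mem_uIcc hv).trans hyx)
    obtain ⟨hyx', hxy'⟩ := hcomp n hn x y hsub (by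
      rw [abs_sub_comm, one_mul]
      nlinarith [deltan_pos hn x])
    exact ⟨(le_inv_mul_iff₀ hcs).1 hxy', (le_inv_mul_iff₀ hcs).2 hyx'⟩
  obtain ⟨hlo, hhi⟩ := hw.average_comparable_of_locally_comparable hx.1 (deltan_pos hn x)
    (deltan_le_two hn x) ht ht₂ ((div_lt_iff₀ ht).1 hk).le hloc
  exact inv_add_mul_le_and_le_mul (by positivity) hLk (hw.1 x) hlo hhi

theorem stmt10 (M : ℕ) (hM : 1 ≤ M) (z : Fin M → ℝ) (hz : StrictMono z)
    (hzI : ∀ j, z j ∈ Set.Icc (-1:ℝ) 1) (w : ℝ → ℝ) (L : ℝ) (hw : IsDoubling w L)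
    (hyp : ∀ A B : ℝ, 0 < A → 0 < B → ∃ cs : ℝ, 0 < cs ∧ ∀ n : ℕ, 1 ≤ n → ∀ x y : ℝ,
      Set.uIcc x y ⊆ ISet M z A (1/n) → |x - y| ≤ B * deltan n x →
        cs * w y ≤ w x ∧ w x ≤ cs⁻¹ * w y) :
    ∀ A : ℝ, 0 < A → ∃ C : ℝ, 0 < C ∧ ∀ n : ℕ, 1 ≤ n → ∀ x ∈ ISet M z A (1/n),
      C⁻¹ * wavg w n x ≤ w x ∧ w x ≤ C * wavg w n x :=
  stmt10_general M z hzI w L hw hyp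
end
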